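/- arXiv:2407.19595 — 9 statements merged into one kernel-verified Lean document; each statement's English description precedes it below -/
import Mathlib

section
/- For every real p ≥ 1 and all x, y ∈ ℝ² with x₀ > |x₁| and y₀ > |y₁| (i.e., x and y are future-directed timelike), the reverse triangle inequality holds: ((x₀+y₀)^p − |x₁+y₁|^p)^{1/p} ≥ (x₀^p − |x₁|^p)^{1/p} + (y₀^p − |y₁|^p)^{1/p}. -/
/-!
Write `A` and `C` for the Lorentzian norms of `x` and `y`. Then `(A, |x₁|)` and `(C, |y₁|)` have
`ℓ^p`-norms `x₀` and `y₀`, so Minkowski's inequality gives `(A + C)^p + (|x₁| + |y₁|)^p ≤ (x₀ + y₀)^p`;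
the reverse triangle inequality follows after bounding `|x₁ + y₁| ≤ |x₁| + |y₁|` and taking `p`-th roots.
-/

open Real

theorem add_rpow_add_add_rpow_le_of_rpow_add_rpow_eq {p a b c d u v : ℝ} (hp : 1 ≤ p)
    (ha : 0 ≤ a) (hb : 0 ≤ b) (hc : 0 ≤ c) (hd : 0 ≤ d) (hu : 0 ≤ u) (hv : 0 ≤ v)
    (hab : a ^ p + b ^ p = u ^ p) (hcd : c ^ p + d ^ p = v ^ p) :
    (a + c) ^ p + (b + d) ^ p ≤ (u + v) ^ p := by
  have hp0 : 0 < p := zero_lt_one.trans_le hp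
  have hmink := Real.Lp_add_le_of_nonneg (s := Finset.univ) (f := ![a, b]) (g := ![c, d]) hp
    (by intro i _; fin_cases i <;> assumption) (by intro i _; fin_cases i <;> assumption)
  simp only [Fin.sum_univ_two, Matrix.cons_val_zero, Matrix.cons_val_one, hab, hcd, one_div,
    rpow_rpow_inv hu hp0.ne', rpow_rpow_inv hv hp0.ne'] at hmink
  rwa [rpow_inv_le_iff_of_pos (by positivity) (by positivity) hp0] at hmink

/-- For every real `p ≥ 1` and all future-directed timelike vectors
`x = (x₀, x₁)`, `y = (y₀, y₁)` in `ℝ²` (i.e. `x₀ > |x₁|`, `y₀ > |y₁|`), the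
reverse triangle inequality for the Lorentzian p-norm holds. -/
theorem lorentz_pnorm_reverse_triangle (p : ℝ) (hp : 1 ≤ p)
    (x₀ x₁ y₀ y₁ : ℝ) (hx : |x₁| < x₀) (hy : |y₁| < y₀) :
    ((x₀ + y₀) ^ p - |x₁ + y₁| ^ p) ^ (1 / p) ≥
      (x₀ ^ p - |x₁| ^ p) ^ (1 / p) + (y₀ ^ p - |y₁| ^ p) ^ (1 / p) := by
  have hp0 : 0 < p := zero_lt_one.trans_le hp
  have hxp : 0 ≤ x₀ ^ p - |x₁| ^ p := sub_nonneg.2 (rpow_le_rpow (abs_nonneg _) hx.le hp0.le)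
  have hyp : 0 ≤ y₀ ^ p - |y₁| ^ p := sub_nonneg.2 (rpow_le_rpow (abs_nonneg _) hy.le hp0.le)
  set A := (x₀ ^ p - |x₁| ^ p) ^ (1 / p) with hA_def
  set C := (y₀ ^ p - |y₁| ^ p) ^ (1 / p) with hC_def
  have hA : A ^ p + |x₁| ^ p = x₀ ^ p := by
    rw [hA_def, one_div, rpow_inv_rpow hxp hp0.ne', sub_add_cancel]
  have hC : C ^ p + |y₁| ^ p = y₀ ^ p := by
    rw [hC_def, one_div, rpow_inv_rpow hyp hp0.ne', sub_add_cancel]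
  have hmink : (A + C) ^ p + (|x₁| + |y₁|) ^ p ≤ (x₀ + y₀) ^ p :=
    add_rpow_add_add_rpow_le_of_rpow_add_rpow_eq hp (rpow_nonneg hxp _) (abs_nonneg _)
      (rpow_nonneg hyp _) (abs_nonneg _) ((abs_nonneg _).trans hx.le)
      ((abs_nonneg _).trans hy.le) hA hC
  have htri : |x₁ + y₁| ^ p ≤ (|x₁| + |y₁|) ^ p :=
    rpow_le_rpow (abs_nonneg _) (abs_add_le _ _) hp0.le
  have hAC : 0 ≤ A + C := add_nonneg (rpow_nonneg hxp _) (rpow_nonneg hyp _)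
  have hroot : (A + C) ^ p ≤ (x₀ + y₀) ^ p - |x₁ + y₁| ^ p := by linarith
  have hsum := (le_rpow_inv_iff_of_pos hAC ((rpow_nonneg hAC p).trans hroot) hp0).2 hroot
  rwa [← one_div] at hsum
end

section
/- For every real p ≥ 1, the Lorentzian p-norm N_p, i.e., the function x ↦ (x₀^p − |x₁|^p)^{1/p}, is concave on the closed future cone {x ∈ ℝ² : x₀ ≥ |x₁|}. -/
/-!
Since `N(x) = (x₀ ^ p - |x₁| ^ p) ^ (1 / p)` is positively homogeneous, concavity reduces to
superadditivity. For the pairs `(a, b) = (x₀, |x₁|)` and `(c, d) = (y₀, |y₁|)`, superadditivity is the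
reverse Minkowski inequality `N(a, b) + N(c, d) ≤ N(a + c, b + d)`, which is the ordinary
Minkowski inequality in `ℓᵖ(Fin 2)` applied to `(N(a, b), b)` and `(N(c, d), d)`, whose `ℓᵖ`-norms
are `a` and `c`. Finally `|x₁ + y₁| ≤ |x₁| + |y₁|` and `N` is antitone in its second argument.
-/

open Real

namespace Real

theorem Lp_add_le_of_nonneg_two {p a b c d : ℝ} (hp : 1 ≤ p)
    (ha : 0 ≤ a) (hb : 0 ≤ b) (hc : 0 ≤ c) (hd : 0 ≤ d) :
    ((a + c) ^ p + (b + d) ^ p) ^ (1 / p) ≤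
      (a ^ p + b ^ p) ^ (1 / p) + (c ^ p + d ^ p) ^ (1 / p) := by
  have h := Lp_add_le_of_nonneg (s := Finset.univ) (f := ![a, b]) (g := ![c, d]) hp
    (by simp [Fin.forall_fin_two, ha, hb]) (by simp [Fin.forall_fin_two, hc, hd])
  simpa [Fin.sum_univ_two] using h

end Real

theorem abs_mul_add_mul_le {s t u v : ℝ} (hs : 0 ≤ s) (ht : 0 ≤ t) :
    |s * u + t * v| ≤ s * |u| + t * |v| := by
  simpa [abs_mul, abs_of_nonneg hs, abs_of_nonneg ht] using abs_add_le (s * u) (t * v)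

theorem convex_abs_snd_le_fst : Convex ℝ {x : ℝ × ℝ | |x.2| ≤ x.1} := by
  intro x hx y hy s t hs ht _
  calc |s * x.2 + t * y.2| ≤ s * |x.2| + t * |y.2| := abs_mul_add_mul_le hs ht
    _ ≤ s * x.1 + t * y.1 := by gcongr <;> assumption

/-- The Lorentzian `p`-norm of `(a, b)`, meaningful for `0 ≤ b ≤ a`. -/
noncomputable def lorentzNorm (p a b : ℝ) : ℝ := (a ^ p - b ^ p) ^ (1 / p)

section lorentzNorm

variable {p a b : ℝ}

theorem rpow_sub_rpow_nonneg (hp : 0 ≤ p) (hb : 0 ≤ b) (hba : b ≤ a) : 0 ≤ a ^ p - b ^ p :=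
  sub_nonneg.2 (rpow_le_rpow hb hba hp)

theorem lorentzNorm_nonneg (hp : 0 ≤ p) (hb : 0 ≤ b) (hba : b ≤ a) : 0 ≤ lorentzNorm p a b :=
  rpow_nonneg (rpow_sub_rpow_nonneg hp hb hba) _

theorem lorentzNorm_rpow (hp : 0 < p) (hb : 0 ≤ b) (hba : b ≤ a) :
    lorentzNorm p a b ^ p = a ^ p - b ^ p := by
  rw [lorentzNorm, one_div, rpow_inv_rpow (rpow_sub_rpow_nonneg hp.le hb hba) hp.ne']

theorem lorentzNorm_mul {t : ℝ} (hp : 0 < p) (ht : 0 ≤ t) (hb : 0 ≤ b) (hba : b ≤ a) :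
    lorentzNorm p (t * a) (t * b) = t * lorentzNorm p a b := by
  rw [lorentzNorm, lorentzNorm, mul_rpow ht (hb.trans hba), mul_rpow ht hb, ← mul_sub,
    mul_rpow (rpow_nonneg ht _) (rpow_sub_rpow_nonneg hp.le hb hba), one_div,
    rpow_rpow_inv ht hp.ne']

theorem lorentzNorm_le_lorentzNorm_of_le {b' : ℝ} (hp : 0 ≤ p) (hb' : 0 ≤ b') (hb'b : b' ≤ b)
    (hba : b ≤ a) : lorentzNorm p a b ≤ lorentzNorm p a b' := by
  have hb := hb'.trans hb'b
  refine rpow_le_rpow (rpow_sub_rpow_nonneg hp hb hba) ?_ (by positivity)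
  exact sub_le_sub_left (rpow_le_rpow hb' hb'b hp) _

theorem lorentzNorm_add_lorentzNorm_le {c d : ℝ} (hp : 1 ≤ p) (hb : 0 ≤ b) (hba : b ≤ a)
    (hd : 0 ≤ d) (hdc : d ≤ c) :
    lorentzNorm p a b + lorentzNorm p c d ≤ lorentzNorm p (a + c) (b + d) := by
  have hp0 : 0 < p := one_pos.trans_le hp
  have hA := lorentzNorm_nonneg hp0.le hb hba
  have hC := lorentzNorm_nonneg hp0.le hd hdc
  have hAb : lorentzNorm p a b ^ p + b ^ p = a ^ p := by
    rw [lorentzNorm_rpow hp0 hb hba, sub_add_cancel]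
  have hCd : lorentzNorm p c d ^ p + d ^ p = c ^ p := by
    rw [lorentzNorm_rpow hp0 hd hdc, sub_add_cancel]
  have hmink := Lp_add_le_of_nonneg_two hp hA hb hC hd
  rw [hAb, hCd, one_div, rpow_rpow_inv (hb.trans hba) hp0.ne',
    rpow_rpow_inv (hd.trans hdc) hp0.ne', rpow_inv_le_iff_of_pos (by positivity) (by linarith)
    hp0] at hmink
  change _ ≤ ((a + c) ^ p - (b + d) ^ p) ^ (1 / p)
  rw [one_div, le_rpow_inv_iff_of_pos (by positivity)
    (rpow_sub_rpow_nonneg hp0.le (by positivity) (by linarith)) hp0]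
  linarith

end lorentzNorm

/-- For every real `p ≥ 1`, the Lorentzian p-norm `x ↦ (x₀^p − |x₁|^p)^(1/p)`
is concave on the closed future cone `{x ∈ ℝ² : x₀ ≥ |x₁|}`. -/
theorem concaveOn_lorentz_pnorm (p : ℝ) (hp : 1 ≤ p) :
    ConcaveOn ℝ {x : ℝ × ℝ | |x.2| ≤ x.1}
      (fun x : ℝ × ℝ => (x.1 ^ p - |x.2| ^ p) ^ (1 / p)) := by
  have hp0 : 0 < p := one_pos.trans_le hp
  refine ⟨convex_abs_snd_le_fst, fun x (hx : |x.2| ≤ x.1) y (hy : |y.2| ≤ y.1) s t hs ht _ => ?_⟩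
  calc s * lorentzNorm p x.1 |x.2| + t * lorentzNorm p y.1 |y.2|
      = lorentzNorm p (s * x.1) (s * |x.2|) + lorentzNorm p (t * y.1) (t * |y.2|) := by
        rw [lorentzNorm_mul hp0 hs (abs_nonneg _) hx, lorentzNorm_mul hp0 ht (abs_nonneg _) hy]
    _ ≤ lorentzNorm p (s * x.1 + t * y.1) (s * |x.2| + t * |y.2|) :=
        lorentzNorm_add_lorentzNorm_le hp (by positivity) (by gcongr) (by positivity) (by gcongr)
    _ ≤ lorentzNorm p (s * x.1 + t * y.1) |s * x.2 + t * y.2| :=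
        lorentzNorm_le_lorentzNorm_of_le hp0.le (abs_nonneg _) (abs_mul_add_mul_le hs ht)
          (by gcongr)
end

section
/- For every real p with 1 < p and p ≠ 2, the Lorentzian parallelogram law fails for the vectors x = (2,0) and y = (1, 1/4): concretely, 8 + (1 − (1/4)^p)^{2/p} ≠ (3^p − (1/4)^p)^{2/p}. (Here 8 + 2(1 − (1/4)^p)^{2/p} = 2·N_p(x)² + 2·N_p(y)², and (3^p − (1/4)^p)^{2/p} + (1 − (1/4)^p)^{2/p} = N_p(x+y)² + N_p(x−y)².) -/
/-!
Put `q = p / 2` and `v = (1 - (1/4)^p)^(2/p) ∈ (0, 1)`. Raising the claimed equality to the power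
`q` turns it into `(v + 8)^q - v^q = (1 + 8)^q - 1^q`. For `q ≠ 1` the map `t ↦ t^q` is strictly
convex or strictly concave on `[0, ∞)`, so its increments `t ↦ (t + 8)^q - t^q` are strictly
monotone there, forcing `v = 1`.
-/

open Set

section Increments

variable {𝕜 : Type*} [Field 𝕜] [LinearOrder 𝕜] [IsStrictOrderedRing 𝕜] {s : Set 𝕜} {f : 𝕜 → 𝕜}
  {x y h : 𝕜}

theorem StrictConvexOn.sub_lt_sub_of_lt (hf : StrictConvexOn 𝕜 s f) (hx : x ∈ s)
    (hyh : y + h ∈ s) (hh : 0 < h) (hxy : x < y) : f (x + h) - f x < f (y + h) - f y := by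
  have hIcc := hf.1.ordConnected.out hx hyh
  have hxh : x + h ∈ s := hIcc ⟨by linarith, by linarith⟩
  have hy : y ∈ s := hIcc ⟨hxy.le, by linarith⟩
  -- compare both increments with the slope of the chord from `x` to `y + h`
  have h₁ := hf.secant_strict_mono hx hxh hyh (by linarith) (by linarith) (by linarith)
  have h₂ := hf.secant_strict_mono hyh hx hy (by linarith) (by linarith) hxy
  have hslopes : (f (x + h) - f x) / h < (f (y + h) - f y) / h :=
    calc (f (x + h) - f x) / h = (f (x + h) - f x) / (x + h - x) := by rw [add_sub_cancel_left]
      _ < (f (y + h) - f x) / (y + h - x) := h₁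
      _ = (f x - f (y + h)) / (x - (y + h)) := by rw [← neg_div_neg_eq, neg_sub, neg_sub]
      _ < (f y - f (y + h)) / (y - (y + h)) := h₂
      _ = (f (y + h) - f y) / h := by rw [← neg_div_neg_eq, neg_sub, neg_sub, add_sub_cancel_left]
  exact (div_lt_div_iff_of_pos_right hh).1 hslopes

theorem StrictConcaveOn.sub_lt_sub_of_lt (hf : StrictConcaveOn 𝕜 s f) (hx : x ∈ s)
    (hyh : y + h ∈ s) (hh : 0 < h) (hxy : x < y) : f (y + h) - f y < f (x + h) - f x := by
  have := hf.neg.sub_lt_sub_of_lt hx hyh hh hxy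
  simp only [Pi.neg_apply] at this
  linarith

end Increments

theorem Real.injOn_rpow_add_sub_rpow {a q : ℝ} (ha : 0 < a) (hq : 0 < q) (hq1 : q ≠ 1) :
    InjOn (fun t : ℝ ↦ (t + a) ^ q - t ^ q) (Ici 0) := by
  have hshift {t : ℝ} (ht : t ∈ Ici (0 : ℝ)) : t + a ∈ Ici (0 : ℝ) :=
    mem_Ici.2 (by linarith [mem_Ici.1 ht])
  rcases lt_or_gt_of_ne hq1 with hq1 | hq1
  · exact StrictAntiOn.injOn fun x hx y hy hxy ↦
      (Real.strictConcaveOn_rpow hq hq1).sub_lt_sub_of_lt hx (hshift hy) ha hxy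
  · exact StrictMonoOn.injOn fun x hx y hy hxy ↦
      (strictConvexOn_rpow hq1).sub_lt_sub_of_lt hx (hshift hy) ha hxy

/-- For every real `p` with `1 < p` and `p ≠ 2`, the Lorentzian parallelogram
law fails for `x = (2,0)` and `y = (1, 1/4)`:
`8 + (1 − (1/4)^p)^(2/p) ≠ (3^p − (1/4)^p)^(2/p)`. -/
theorem lorentz_parallelogram_fails (p : ℝ) (hp : 1 < p) (hp2 : p ≠ 2) :
    8 + (1 - (1 / 4 : ℝ) ^ p) ^ (2 / p) ≠ ((3 : ℝ) ^ p - (1 / 4 : ℝ) ^ p) ^ (2 / p) := by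
  have hp0 : 0 < p := by linarith
  set d : ℝ := (1 / 4 : ℝ) ^ p
  have hd0 : 0 < d := by positivity
  have hd1 : d < 1 := Real.rpow_lt_one (by norm_num) (by norm_num) hp0
  have hd3 : d < 3 ^ p := Real.rpow_lt_rpow (by norm_num) (by norm_num) hp0
  set v : ℝ := (1 - d) ^ (2 / p)
  have hv1 : v < 1 := Real.rpow_lt_one (by linarith) (by linarith) (by positivity)
  have hroot {x : ℝ} (hx : 0 ≤ x) : (x ^ (2 / p)) ^ (p / 2) = x := by
    rw [← inv_div 2 p, Real.rpow_rpow_inv hx (by positivity)]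
  have h9 : (9 : ℝ) ^ (p / 2) = 3 ^ p := by
    rw [show (9 : ℝ) = 3 ^ 2 by norm_num, ← Real.rpow_natCast_mul (by norm_num)]
    norm_num [mul_div_cancel₀]
  intro heq
  have hinc : (v + 8) ^ (p / 2) - v ^ (p / 2) = (1 + 8) ^ (p / 2) - 1 ^ (p / 2) := by
    rw [add_comm, heq, hroot (by linarith), hroot (by linarith)]
    norm_num [h9]
  have hv : v = 1 := Real.injOn_rpow_add_sub_rpow (by norm_num) (by positivity)
    (fun h ↦ hp2 (by linarith))
    (mem_Ici.2 (by positivity)) (mem_Ici.2 zero_le_one) hinc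
  exact hv1.ne hv
end

section
/- For the vectors x = (2,0) and y = (1, 1/4), the sign of the Lorentzian parallelogram defect is determined by p: for every real p with 1 < p < 2 one has 8 + (1 − (1/4)^p)^{2/p} > (3^p − (1/4)^p)^{2/p}, and for every real p > 2 one has 8 + (1 − (1/4)^p)^{2/p} < (3^p − (1/4)^p)^{2/p}. -/
/-!
Write `t = 2/p`, `a = (1/4)^p` and `b = (1/12)^p`, so that `a = 3^p b` and, by homogeneity,
`(3^p - (1/4)^p)^t = 9 (1 - b)^t`. For `t ≥ 1` Bernoulli's inequality gives
`(1 - a)^t ≥ 1 - t a` and `(1 - b)^t ≤ 1 - b`, so the defect is at least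
`9 b - t a = (9 - 2 · 3^p / p) b`; for `t ≤ 1` both inequalities reverse. Finally
`2 · 3^p < 9 p` for `1 ≤ p < 2` (Bernoulli again, for `3^(p-1)`) and `2 · 3^p > 9 p` for `p > 2`
(from `3^x ≥ e^x ≥ 1 + x`).
-/

open Real

lemma rpow_sub_rpow_rpow_div_eq {x y p : ℝ} (r : ℝ) (hx : 0 < x) (hy : 0 ≤ y) (hyx : y ≤ x)
    (hp : 0 < p) :
    (x ^ p - y ^ p) ^ (r / p) = x ^ r * (1 - (y / x) ^ p) ^ (r / p) := by
  have hyx_pow : (y / x) ^ p ≤ 1 :=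
    rpow_le_one (div_nonneg hy hx.le) ((div_le_one hx).2 hyx) hp.le
  have hfactor : x ^ p - y ^ p = x ^ p * (1 - (y / x) ^ p) := by
    rw [div_rpow hy hx.le, mul_sub, mul_one, mul_div_cancel₀ _ (rpow_pos_of_pos hx p).ne']
  rw [hfactor, mul_rpow (rpow_nonneg hx.le p) (sub_nonneg.2 hyx_pow), ← rpow_mul hx.le,
    mul_div_cancel₀ _ hp.ne']

lemma sub_one_add_rpow_one_sub_gt {a b c t : ℝ} (ht : 1 ≤ t) (ha : a ≤ 1) (hb₀ : 0 ≤ b)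
    (hb₁ : b ≤ 1) (hc : 0 ≤ c) (hab : t * a < c * b) :
    c * (1 - b) ^ t < c - 1 + (1 - a) ^ t := by
  have hbernoulli : 1 - t * a ≤ (1 - a) ^ t := by
    simpa [sub_eq_add_neg] using one_add_mul_self_le_rpow_one_add (s := -a) (by linarith) ht
  have hb_pow : (1 - b) ^ t ≤ 1 - b := by
    simpa using rpow_le_rpow_of_exponent_ge' (by linarith) (by linarith) zero_le_one ht
  nlinarith [mul_le_mul_of_nonneg_left hb_pow hc]

lemma sub_one_add_rpow_one_sub_lt {a b c t : ℝ} (ht₀ : 0 ≤ t) (ht₁ : t ≤ 1) (ha : a ≤ 1)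
    (hb₀ : 0 ≤ b) (hb₁ : b ≤ 1) (hc : 0 ≤ c) (hab : c * b < t * a) :
    c - 1 + (1 - a) ^ t < c * (1 - b) ^ t := by
  have hbernoulli : (1 - a) ^ t ≤ 1 - t * a := by
    simpa [sub_eq_add_neg] using rpow_one_add_le_one_add_mul_self (s := -a) (by linarith) ht₀ ht₁
  have hb_pow : 1 - b ≤ (1 - b) ^ t := by
    simpa using rpow_le_rpow_of_exponent_ge' (x := 1 - b) (by linarith) (by linarith) ht₀ ht₁
  nlinarith [mul_le_mul_of_nonneg_left hb_pow hc]

lemma two_mul_three_rpow_lt_nine_mul {p : ℝ} (hp₁ : 1 ≤ p) (hp₂ : p < 2) :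
    2 * (3 : ℝ) ^ p < 9 * p := by
  have hbernoulli : (3 : ℝ) ^ (p - 1) ≤ 1 + (p - 1) * 2 := by
    have := rpow_one_add_le_one_add_mul_self (s := 2) (by norm_num) (sub_nonneg.2 hp₁)
      (by linarith : p - 1 ≤ 1)
    norm_num at this
    linarith
  have hsplit : (3 : ℝ) ^ p = 3 * 3 ^ (p - 1) := by
    rw [rpow_sub (by norm_num), rpow_one, mul_div_cancel₀ _ (by norm_num)]
  linarith

lemma nine_mul_lt_two_mul_three_rpow {p : ℝ} (hp : 2 < p) :
    9 * p < 2 * (3 : ℝ) ^ p := by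
  have hexp : p - 1 < (3 : ℝ) ^ (p - 2) := by
    have hlog : 1 < log 3 := by
      rw [lt_log_iff_exp_lt (by norm_num)]
      exact exp_one_lt_three
    calc p - 1 = (p - 2) + 1 := by ring
      _ ≤ exp (p - 2) := add_one_le_exp _
      _ < exp (log 3 * (p - 2)) := exp_lt_exp.2 (by nlinarith)
      _ = (3 : ℝ) ^ (p - 2) := (rpow_def_of_pos (by norm_num) _).symm
  have hsplit : (3 : ℝ) ^ p = 9 * 3 ^ (p - 2) := by
    rw [rpow_sub (by norm_num), rpow_two]
    ring
  linarith

lemma three_rpow_sub_quarter_rpow_rpow {p : ℝ} (hp : 0 < p) :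
    ((3 : ℝ) ^ p - (1 / 4 : ℝ) ^ p) ^ (2 / p) = 9 * (1 - (1 / 12 : ℝ) ^ p) ^ (2 / p) := by
  rw [rpow_sub_rpow_rpow_div_eq 2 (by norm_num) (by norm_num) (by norm_num) hp, rpow_two]
  norm_num

lemma two_div_mul_quarter_rpow (p : ℝ) :
    2 / p * (1 / 4 : ℝ) ^ p = 2 * (3 : ℝ) ^ p / p * (1 / 12 : ℝ) ^ p := by
  rw [show (1 / 4 : ℝ) = 3 * (1 / 12) by norm_num, mul_rpow (by norm_num) (by norm_num)]
  ring

/-- For `x = (2,0)` and `y = (1, 1/4)`, the sign of the Lorentzian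
parallelogram defect is determined by `p`: for `1 < p < 2` one has
`8 + (1 − (1/4)^p)^(2/p) > (3^p − (1/4)^p)^(2/p)`, and for `p > 2` one has
`8 + (1 − (1/4)^p)^(2/p) < (3^p − (1/4)^p)^(2/p)`. -/
theorem lorentz_parallelogram_defect_sign :
    (∀ p : ℝ, 1 < p → p < 2 →
      8 + (1 - (1 / 4 : ℝ) ^ p) ^ (2 / p) > ((3 : ℝ) ^ p - (1 / 4 : ℝ) ^ p) ^ (2 / p)) ∧
    (∀ p : ℝ, 2 < p →
      8 + (1 - (1 / 4 : ℝ) ^ p) ^ (2 / p) < ((3 : ℝ) ^ p - (1 / 4 : ℝ) ^ p) ^ (2 / p)) := by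
  have hquarter : ∀ p : ℝ, 0 < p → (1 / 4 : ℝ) ^ p ≤ 1 := fun p hp =>
    rpow_le_one (by norm_num) (by norm_num) hp.le
  have htwelfth : ∀ p : ℝ, 0 < p → 0 < (1 / 12 : ℝ) ^ p ∧ (1 / 12 : ℝ) ^ p ≤ 1 := fun p hp =>
    ⟨rpow_pos_of_pos (by norm_num) p, rpow_le_one (by norm_num) (by norm_num) hp.le⟩
  rw [show (8 : ℝ) = 9 - 1 by norm_num]
  constructor
  · intro p hp₁ hp₂
    have hp : 0 < p := by linarith
    obtain ⟨hb₀, hb₁⟩ := htwelfth p hp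
    rw [gt_iff_lt, three_rpow_sub_quarter_rpow_rpow hp]
    refine sub_one_add_rpow_one_sub_gt ((one_le_div₀ hp).2 hp₂.le) (hquarter p hp) hb₀.le hb₁
      (by norm_num) ?_
    rw [two_div_mul_quarter_rpow]
    exact mul_lt_mul_of_pos_right
      ((div_lt_iff₀ hp).2 (two_mul_three_rpow_lt_nine_mul hp₁.le hp₂)) hb₀
  · intro p hp₂
    have hp : 0 < p := by linarith
    obtain ⟨hb₀, hb₁⟩ := htwelfth p hp
    rw [three_rpow_sub_quarter_rpow_rpow hp]
    refine sub_one_add_rpow_one_sub_lt (by positivity) ((div_le_one₀ hp).2 hp₂.le)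
      (hquarter p hp) hb₀.le hb₁ (by norm_num) ?_
    rw [two_div_mul_quarter_rpow]
    exact mul_lt_mul_of_pos_right
      ((lt_div_iff₀ hp).2 (nine_mul_lt_two_mul_three_rpow hp₂)) hb₀
end

section
/- For every real p > 2, the function λ ↦ (1 − (1−2λ)^p)^{2/p} / λ tends to +∞ as λ tends to 0 from the right. In particular, the function λ ↦ (1 − (1−2λ)^p)^{2/p} is not Lipschitz continuous on any right neighborhood of 0. -/
/-! Since `(1 - t)^p ≤ 1 - t` on `[0, 1]`, the quantity `1 - (1 - 2λ)^p` is at least `2λ`, so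
`(1 - (1 - 2λ)^p)^(2/p) / λ ≥ 2^(2/p) λ^(2/p - 1)`, which blows up because `2/p < 1`.
A function vanishing at `0` whose difference quotients at `0` are unbounded is not Lipschitz
near `0`. -/

open Filter Topology

theorem le_one_sub_one_sub_rpow {t p : ℝ} (ht₀ : 0 ≤ t) (ht₁ : t ≤ 1) (hp : 1 ≤ p) :
    t ≤ 1 - (1 - t) ^ p := by
  have := Real.rpow_le_self_of_le_one (sub_nonneg.2 ht₁) (by linarith) hp
  linarith

theorem two_rpow_mul_rpow_sub_one_le_one_sub_one_sub_two_mul_rpow_div {p l : ℝ} (hp : 1 ≤ p)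
    (hl₀ : 0 < l) (hl₁ : l ≤ 1 / 2) :
    2 ^ (2 / p) * l ^ (2 / p - 1) ≤ (1 - (1 - 2 * l) ^ p) ^ (2 / p) / l := by
  have hlower : 2 * l ≤ 1 - (1 - 2 * l) ^ p :=
    le_one_sub_one_sub_rpow (by linarith) (by linarith) hp
  calc 2 ^ (2 / p) * l ^ (2 / p - 1)
      = (2 * l) ^ (2 / p) / l := by
        rw [Real.rpow_sub_one hl₀.ne', Real.mul_rpow zero_le_two hl₀.le, mul_div_assoc]
    _ ≤ (1 - (1 - 2 * l) ^ p) ^ (2 / p) / l := by gcongr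

theorem tendsto_one_sub_one_sub_two_mul_rpow_div {p : ℝ} (hp : 2 < p) :
    Tendsto (fun l : ℝ => (1 - (1 - 2 * l) ^ p) ^ (2 / p) / l) (𝓝[>] 0) atTop := by
  have hexp : 2 / p - 1 < 0 := by
    rw [sub_neg, div_lt_one (by linarith)]
    exact hp
  refine tendsto_atTop_mono' _ ?_
    ((tendsto_rpow_neg_nhdsGT_zero hexp).const_mul_atTop (by positivity : (0 : ℝ) < 2 ^ (2 / p)))
  filter_upwards [Ioc_mem_nhdsGT (by norm_num : (0 : ℝ) < 1 / 2)] with l ⟨hl₀, hl₁⟩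
  exact two_rpow_mul_rpow_sub_one_le_one_sub_one_sub_two_mul_rpow_div (by linarith) hl₀ hl₁

theorem not_lipschitzOnWith_Ico_of_tendsto_slope_atTop {f : ℝ → ℝ} {a b : ℝ} (hab : a < b)
    (hf : Tendsto (slope f a) (𝓝[>] a) atTop) (K : NNReal) :
    ¬ LipschitzOnWith K f (Set.Ico a b) := by
  intro hK
  obtain ⟨x, hslope, hxa, hxb⟩ := ((hf.eventually_gt_atTop (K : ℝ)).and
    (Ioo_mem_nhdsGT hab)).exists
  have hdist := hK.dist_le_mul x ⟨hxa.le, hxb⟩ a ⟨le_rfl, hab⟩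
  rw [Real.dist_eq, Real.dist_eq, abs_of_pos (sub_pos.2 hxa)] at hdist
  rw [slope_def_field, lt_div_iff₀ (sub_pos.2 hxa)] at hslope
  linarith [le_abs_self (f x - f a)]

/-- For every real `p > 2`, `λ ↦ (1 − (1−2λ)^p)^(2/p) / λ` tends to `+∞` as
`λ → 0⁺`; in particular `λ ↦ (1 − (1−2λ)^p)^(2/p)` is not Lipschitz on any
right neighborhood of `0`. -/
theorem noldus_sq_not_lipschitz (p : ℝ) (hp : 2 < p) :
    Tendsto (fun l : ℝ => (1 - (1 - 2 * l) ^ p) ^ (2 / p) / l)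
        (nhdsWithin 0 (Set.Ioi 0)) atTop ∧
      ∀ ε : ℝ, 0 < ε → ∀ K : NNReal,
        ¬ LipschitzOnWith K (fun l : ℝ => (1 - (1 - 2 * l) ^ p) ^ (2 / p))
          (Set.Ico 0 ε) := by
  have hlim := tendsto_one_sub_one_sub_two_mul_rpow_div hp
  refine ⟨hlim, fun ε hε K => not_lipschitzOnWith_Ico_of_tendsto_slope_atTop hε ?_ K⟩
  have hzero : (0 : ℝ) ^ (2 / p) = 0 := Real.zero_rpow (by positivity)
  simpa [slope_fun_def_field, hzero] using hlim
end

section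
/- Fix a real p ≥ 1, and for real q ≥ 1 define S(q) := sup over φ ∈ (0,1) of |(1 − φ^p)^{1/p} − (1 − φ^q)^{1/q}|. Then S(q) tends to 0 as q tends to p within [1, ∞). In particular S(p) = 0, so the Lorentzian Gromov–Hausdorff distance between the cylinders Cyl^p and Cyl^q, which is bounded above by S(q)/2, tends to 0 as q → p. -/
/-!
The map `(q, φ) ↦ (1 - φ ^ q) ^ (1 / q)` is jointly continuous for `q > 0`: real powers are
continuous wherever the exponent is positive, even at base `0`. A jointly continuous family is
uniformly continuous in the parameter over the compact interval `[0, 1]`, so the supremum over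
`φ ∈ (0, 1)` of the difference to the value at `q = p` tends to `0`.
-/

open Filter Set Topology

theorem tendsto_sSup_dist_image_of_continuousOn {α β E : Type*} [TopologicalSpace α]
    [TopologicalSpace β] [PseudoMetricSpace E] {f : α → β → E} {s : Set α} {k t : Set β}
    {p : α} (hk : IsCompact k) (htk : t ⊆ k) (hf : ContinuousOn (Function.uncurry f) (s ×ˢ k))
    (hp : p ∈ s) :
    Tendsto (fun q => sSup ((fun x => dist (f p x) (f q x)) '' t)) (𝓝[s] p) (𝓝 0) := by
  rw [Metric.tendsto_nhds]
  intro ε hε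
  obtain ⟨v, hv, hvclose⟩ :=
    hk.mem_uniformity_of_prod hf hp (Metric.dist_mem_uniformity (half_pos hε))
  filter_upwards [hv] with q hq
  have hnonneg : 0 ≤ sSup ((fun x => dist (f p x) (f q x)) '' t) :=
    Real.sSup_nonneg (by rintro _ ⟨x, -, rfl⟩; exact dist_nonneg)
  have hle : sSup ((fun x => dist (f p x) (f q x)) '' t) ≤ ε / 2 := by
    refine Real.sSup_le ?_ (half_pos hε).le
    rintro _ ⟨x, hx, rfl⟩
    have hclose : dist (f q x) (f p x) < ε / 2 := hvclose q hq x (htk hx)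
    exact (dist_comm (f p x) (f q x)).trans_le hclose.le
  rw [Real.dist_eq, sub_zero, abs_of_nonneg hnonneg]
  linarith

theorem continuousOn_one_sub_rpow_rpow_one_div :
    ContinuousOn (fun x : ℝ × ℝ => (1 - x.2 ^ x.1) ^ (1 / x.1)) (Ioi 0 ×ˢ univ) := by
  rintro ⟨q, φ⟩ ⟨hq : 0 < q, -⟩
  have hbase : ContinuousAt (fun x : ℝ × ℝ => 1 - x.2 ^ x.1) (q, φ) :=
    continuousAt_const.sub (continuousAt_snd.rpow continuousAt_fst (Or.inr hq))
  exact (hbase.rpow (continuousAt_const.div continuousAt_fst hq.ne')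
    (Or.inr (one_div_pos.mpr hq))).continuousWithinAt

/-- Fix `p ≥ 1` and set
`S q := sup_{φ ∈ (0,1)} |(1 − φ^p)^(1/p) − (1 − φ^q)^(1/q)|`.
Then `S q → 0` as `q → p` within `[1, ∞)`, and `S p = 0`. -/
theorem cylinder_GH_continuous (p : ℝ) (hp : 1 ≤ p) :
    Tendsto
      (fun q : ℝ => sSup ((fun φ : ℝ =>
          |(1 - φ ^ p) ^ (1 / p) - (1 - φ ^ q) ^ (1 / q)|) '' Set.Ioo 0 1))
      (nhdsWithin p (Set.Ici 1)) (nhds 0) ∧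
    sSup ((fun φ : ℝ =>
        |(1 - φ ^ p) ^ (1 / p) - (1 - φ ^ p) ^ (1 / p)|) '' Set.Ioo 0 1) = 0 := by
  refine ⟨?_, by simp [(nonempty_Ioo.mpr zero_lt_one).image_const]⟩
  have hcont : ContinuousOn (Function.uncurry fun q φ : ℝ => (1 - φ ^ q) ^ (1 / q))
      (Ici 1 ×ˢ Icc 0 1) :=
    continuousOn_one_sub_rpow_rpow_one_div.mono <|
      prod_mono (fun q (hq : 1 ≤ q) => show 0 < q by linarith) (subset_univ _)
  simpa only [Real.dist_eq] using
    tendsto_sSup_dist_image_of_continuousOn isCompact_Icc Ioo_subset_Icc_self hcont hp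
end

section
/- Let p and d be real numbers with p ≥ 1, d > 0 and d > p. Then the sequence v(n) := n · ((1/(2n) + 1/2)^p − (1/2 − 1/(2n))^p)^{d/p}, indexed by positive natural numbers n, tends to 0 as n → ∞. -/
open Filter Real Set Topology

/- The two side lengths `1 / 2 ± 1 / (2 n)` lie in `[0, 1]` and differ by `1 / n`, and `x ↦ x ^ p`
is `p`-Lipschitz on `[0, 1]`; hence `v n ≤ n * (p / n) ^ (d / p) = p ^ (d / p) * n ^ (1 - d / p)`,
which tends to `0` because `d / p > 1`. -/

theorem Real.rpow_sub_rpow_le_mul_sub {p a b : ℝ} (hp : 1 ≤ p) (hb : 0 ≤ b) (hba : b ≤ a)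
    (ha : a ≤ 1) : a ^ p - b ^ p ≤ p * (a - b) := by
  have hderiv (x : ℝ) : HasDerivAt (fun x ↦ x ^ p) (p * x ^ (p - 1)) x :=
    hasDerivAt_rpow_const (Or.inr hp)
  refine (convex_Icc 0 1).image_sub_le_mul_sub_of_deriv_le
    (continuous_rpow_const (by linarith)).continuousOn
    (fun x _ ↦ (hderiv x).differentiableAt.differentiableWithinAt) (fun x hx ↦ ?_)
    b ⟨hb, hba.trans ha⟩ a ⟨hb.trans hba, ha⟩ hba
  rw [interior_Icc] at hx
  rw [(hderiv x).deriv]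
  have : x ^ (p - 1) ≤ 1 := rpow_le_one hx.1.le hx.2.le (by linarith)
  nlinarith

theorem tendsto_natCast_mul_rpow_of_le_div {f : ℕ → ℝ} {C q : ℝ} (hq : 1 < q) (hC : 0 ≤ C)
    (hf₀ : ∀ᶠ n in atTop, 0 ≤ f n) (hfC : ∀ᶠ n in atTop, f n ≤ C / n) :
    Tendsto (fun n : ℕ ↦ (n : ℝ) * f n ^ q) atTop (𝓝 0) := by
  have hmajorant : Tendsto (fun n : ℕ ↦ C ^ q * (n : ℝ) ^ (-(q - 1))) atTop (𝓝 0) := by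
    have := ((tendsto_rpow_neg_atTop (by linarith : 0 < q - 1)).comp
      tendsto_natCast_atTop_atTop).const_mul (C ^ q)
    rwa [mul_zero] at this
  refine tendsto_of_tendsto_of_tendsto_of_le_of_le' tendsto_const_nhds hmajorant ?_ ?_
  · filter_upwards [hf₀] with n hn
    positivity
  · filter_upwards [hf₀, hfC, eventually_gt_atTop 0] with n hn₀ hnC hn
    have hn' : (0 : ℝ) < n := Nat.cast_pos.2 hn
    calc (n : ℝ) * f n ^ q ≤ n * (C / n) ^ q := by gcongr
      _ = C ^ q * (n : ℝ) ^ (-(q - 1)) := by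
        rw [div_rpow hC hn'.le, neg_sub, rpow_sub hn', rpow_one]
        field_simp

theorem tilted_diamond_content_tendsto_zero_general (p d : ℝ) (hp : 1 ≤ p)
    (hdp : p < d) :
    Tendsto (fun n : ℕ => (n : ℝ) *
        ((1 / (2 * (n : ℝ)) + 1 / 2) ^ p - (1 / 2 - 1 / (2 * (n : ℝ))) ^ p) ^ (d / p))
      atTop (nhds 0) := by
  have hp₀ : 0 < p := by linarith
  have hsides : ∀ᶠ n : ℕ in atTop, 0 ≤ 1 / 2 - 1 / (2 * (n : ℝ)) ∧
      1 / 2 - 1 / (2 * (n : ℝ)) ≤ 1 / (2 * (n : ℝ)) + 1 / 2 ∧ 1 / (2 * (n : ℝ)) + 1 / 2 ≤ 1 := by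
    filter_upwards [eventually_ge_atTop 1] with n hn
    have hn' : (1 : ℝ) ≤ n := Nat.one_le_cast.2 hn
    have : 1 / (2 * (n : ℝ)) ≤ 1 / 2 := by gcongr; linarith
    have : 0 ≤ 1 / (2 * (n : ℝ)) := by positivity
    refine ⟨?_, ?_, ?_⟩ <;> linarith
  refine tendsto_natCast_mul_rpow_of_le_div ((one_lt_div hp₀).2 hdp) hp₀.le ?_ ?_
  · filter_upwards [hsides] with n hn
    exact sub_nonneg.2 (rpow_le_rpow hn.1 hn.2.1 hp₀.le)
  · filter_upwards [hsides, eventually_gt_atTop 0] with n ⟨hb, hba, ha⟩ hn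
    have hn' : (n : ℝ) ≠ 0 := Nat.cast_ne_zero.2 hn.ne'
    convert rpow_sub_rpow_le_mul_sub hp hb hba ha using 1
    field_simp
    ring

/-- For real `p ≥ 1`, `d > 0` with `d > p`, the Hausdorff-content sums
`v(n) = n · ((1/(2n) + 1/2)^p − (1/2 − 1/(2n))^p)^(d/p)` tend to `0`. -/
theorem tilted_diamond_content_tendsto_zero (p d : ℝ) (hp : 1 ≤ p)
    (hd : 0 < d) (hdp : p < d) :
    Tendsto (fun n : ℕ => (n : ℝ) *
        ((1 / (2 * (n : ℝ)) + 1 / 2) ^ p - (1 / 2 - 1 / (2 * (n : ℝ))) ^ p) ^ (d / p))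
      atTop (nhds 0) :=
  tilted_diamond_content_tendsto_zero_general p d hp hdp
end

section
/- Let p and d be real numbers with p ≥ 1, d > 0 and d < p. Then the sequence v(n) := n · ((1/(2n) + 1/2)^p − (1/2 − 1/(2n))^p)^{d/p}, indexed by positive natural numbers n, tends to +∞ as n → ∞. -/
/-!
Writing `x = 1/(2n)`, Bernoulli's inequality gives
`(1/2 + x)^p - (1/2 - x)^p ≥ p (1/2)^(p-1) x`, so the bracket is at least `c / n` with `c > 0`.
Hence `v(n) ≥ c^(d/p) n^(1 - d/p)`, which tends to infinity because `d/p < 1`.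
-/

open Filter

namespace Real

theorem mul_rpow_sub_one_mul_le_add_rpow_sub_sub_rpow {a x p : ℝ} (ha : 0 < a) (hx : 0 ≤ x)
    (hxa : x ≤ a) (hp : 1 ≤ p) : p * a ^ (p - 1) * x ≤ (a + x) ^ p - (a - x) ^ p := by
  have hp0 : 0 ≤ p := by linarith
  have hbernoulli : a ^ p * (1 + p * (x / a)) ≤ (a + x) ^ p := by
    have hsplit : a + x = a * (1 + x / a) := by field_simp
    rw [hsplit, mul_rpow ha.le (by positivity)]
    gcongr
    exact one_add_mul_self_le_rpow_one_add (by linarith [div_nonneg hx ha.le]) hp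
  have htangent : a ^ p * (1 + p * (x / a)) = a ^ p + p * a ^ (p - 1) * x := by
    rw [rpow_sub_one ha.ne']
    field_simp
  have hsub : (a - x) ^ p ≤ a ^ p := rpow_le_rpow (by linarith) (by linarith) hp0
  linarith

theorem natCast_mul_div_rpow {c r : ℝ} (hc : 0 ≤ c) {n : ℕ} (hn : 0 < n) :
    (n : ℝ) * (c / n) ^ r = c ^ r * (n : ℝ) ^ (1 - r) := by
  have hn' : (0 : ℝ) < n := by exact_mod_cast hn
  rw [div_rpow hc hn'.le, rpow_sub hn', rpow_one]
  field_simp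

theorem tendsto_natCast_mul_rpow_atTop_of_div_le {u : ℕ → ℝ} {c r : ℝ} (hc : 0 < c)
    (hr₀ : 0 ≤ r) (hr₁ : r < 1) (hu : ∀ᶠ n in atTop, c / n ≤ u n) :
    Tendsto (fun n : ℕ => (n : ℝ) * u n ^ r) atTop atTop := by
  have hpow : Tendsto (fun n : ℕ => c ^ r * (n : ℝ) ^ (1 - r)) atTop atTop :=
    ((tendsto_rpow_atTop (by linarith)).comp tendsto_natCast_atTop_atTop).const_mul_atTop
      (rpow_pos_of_pos hc r)
  refine tendsto_atTop_mono' _ ?_ hpow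
  filter_upwards [hu, eventually_gt_atTop 0] with n hcu hn
  rw [← natCast_mul_div_rpow hc.le hn]
  gcongr

end Real

/-- For real `p ≥ 1`, `d > 0` with `d < p`, the Hausdorff-content sums
`v(n) = n · ((1/(2n) + 1/2)^p − (1/2 − 1/(2n))^p)^(d/p)` tend to `+∞`. -/
theorem tilted_diamond_content_tendsto_atTop (p d : ℝ) (hp : 1 ≤ p)
    (hd : 0 < d) (hdp : d < p) :
    Tendsto (fun n : ℕ => (n : ℝ) *
        ((1 / (2 * (n : ℝ)) + 1 / 2) ^ p - (1 / 2 - 1 / (2 * (n : ℝ))) ^ p) ^ (d / p))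
      atTop atTop := by
  have hp₀ : 0 < p := by linarith
  refine Real.tendsto_natCast_mul_rpow_atTop_of_div_le (c := p * (1 / 2) ^ (p - 1) / 2)
    (by positivity) (div_pos hd hp₀).le ((div_lt_one hp₀).mpr hdp) ?_
  filter_upwards [eventually_ge_atTop 1] with n hn
  have hn' : (1 : ℝ) ≤ n := by exact_mod_cast hn
  have hx : 1 / (2 * (n : ℝ)) ≤ 1 / 2 := by gcongr; linarith
  calc p * (1 / 2) ^ (p - 1) / 2 / n = p * (1 / 2) ^ (p - 1) * (1 / (2 * (n : ℝ))) := by ring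
    _ ≤ _ := by
      rw [add_comm]
      exact Real.mul_rpow_sub_one_mul_le_add_rpow_sub_sub_rpow (by norm_num) (by positivity) hx hp
end

section
/- Let k > 0 and let ab, ac, bc > 0 be real numbers satisfying the strict triangle inequality bc < ab + ac (so that 2(ab² + ac²) − bc² > 0). Define, for small λ > 0, g(λ) := (1/√k) · arccos((cos(ab·√k·λ) + cos(ac·√k·λ)) / (2·cos(bc·√k·λ/2))), the distance in the sphere of curvature k from the vertex ā to the midpoint of the opposite side in a comparison triangle with side lengths λ·ab, λ·ac, λ·bc. Then the ratio (g(λ) − λ·√(2ab² + 2ac² − bc²)/2) / λ³ tends to −(k/48) · (ab − ac − bc)(ab + ac − bc)(ab − ac + bc)(ab + ac + bc) / √(2(ab² + ac²) − bc²) as λ tends to 0 from the right. In particular, the deviation of the spherical median length from the flat (Euclidean) median length √(2ab² + 2ac² − bc²)/2 scaled by λ is of order λ³, not λ². -/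
open Filter Topology Real

/-!
Rescaling the sphere of curvature `k` to the unit sphere multiplies lengths by `s = √k`, so the
comparison triangle has sides `aλ, bλ, cλ` with `a = s·ab`, `b = s·ac`, `c = s·bc`; let
`p = s·√(2ab² + 2ac² − bc²)/2` be the Euclidean median of the triangle `a, b, c`. The spherical
median `θ(λ)` has `cos θ(λ) = u(λ) := (cos aλ + cos bλ)/(2 cos (cλ/2))`, and
`cos (pλ) − u(λ) = (cos ((c/2 + p)λ) + cos ((c/2 − p)λ) − cos aλ − cos bλ)/(2 cos (cλ/2))`.
The Euclidean median formula `4p² = 2a² + 2b² − c²` is exactly the cancellation of the `λ²`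
terms of this numerator, so by fourth-order Taylor expansion `cos (pλ) − u(λ) ~ Mλ⁴`, with `M`
Heron's product over `96`. Writing `cos (pλ) − cos θ = 2 sin ((θ + pλ)/2) sin ((θ − pλ)/2)`
first gives `θ/λ → p` and then `(θ − pλ)/λ³ → M/p`.
-/

theorem abs_cos_sub_taylor_le {x : ℝ} (hx : |x| ≤ 1) :
    |cos x - (1 - x ^ 2 / 2 + x ^ 4 / 24)| ≤ |x| ^ 6 * (7 / 4320) := by
  have hre : cos x - (1 - x ^ 2 / 2 + x ^ 4 / 24) =
      (Complex.exp (x * Complex.I) - ∑ m ∈ Finset.range 6, (x * Complex.I) ^ m / m.factorial).re := by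
    simp [Finset.sum_range_succ, Nat.factorial, pow_succ, neg_div, sub_eq_add_neg]
  rw [hre]
  refine (Complex.abs_re_le_norm _).trans ((Complex.exp_bound (by simpa) (by norm_num)).trans_eq ?_)
  norm_num [Nat.factorial]

theorem tendsto_cos_sub_taylor_div_pow_four (α : ℝ) :
    Tendsto (fun l => (cos (α * l) - (1 - (α * l) ^ 2 / 2)) / l ^ 4) (𝓝[≠] 0)
      (𝓝 (α ^ 4 / 24)) := by
  have hsmall : ∀ᶠ l in 𝓝[≠] (0 : ℝ), |α * l| ≤ 1 :=
    (((continuous_const_mul α).abs.tendsto' 0 0 (by simp)).eventually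
      (eventually_le_nhds one_pos)).filter_mono nhdsWithin_le_nhds
  rw [← tendsto_sub_nhds_zero_iff]
  refine squeeze_zero_norm' (a := fun l => α ^ 6 * (7 / 4320) * l ^ 2) ?_ ?_
  · filter_upwards [hsmall, self_mem_nhdsWithin] with l hl hl0
    have hl4 : 0 < l ^ 4 := by positivity [show l ≠ 0 from hl0]
    have herr : (cos (α * l) - (1 - (α * l) ^ 2 / 2)) / l ^ 4 - α ^ 4 / 24 =
        (cos (α * l) - (1 - (α * l) ^ 2 / 2 + (α * l) ^ 4 / 24)) / l ^ 4 := by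
      field_simp [show l ≠ 0 from hl0]
      ring
    rw [herr, norm_div, Real.norm_eq_abs, Real.norm_of_nonneg hl4.le, div_le_iff₀ hl4]
    calc _ ≤ |α * l| ^ 6 * (7 / 4320) := abs_cos_sub_taylor_le hl
      _ = α ^ 6 * (7 / 4320) * l ^ 2 * l ^ 4 := by
        rw [(by decide : Even 6).pow_abs]
        ring
  · exact ((continuous_const.mul (continuous_pow 2)).tendsto' 0 0 (by simp)).mono_left
      nhdsWithin_le_nhds

theorem tendsto_one_sub_cos_mul_div_sq (α : ℝ) :
    Tendsto (fun l => (1 - cos (α * l)) / l ^ 2) (𝓝[≠] 0) (𝓝 (α ^ 2 / 2)) := by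
  have hl2 : Tendsto (fun l : ℝ => l ^ 2) (𝓝[≠] 0) (𝓝 0) :=
    ((continuous_pow 2).tendsto' 0 0 (by simp)).mono_left nhdsWithin_le_nhds
  have h := (hl2.mul (tendsto_cos_sub_taylor_div_pow_four α)).const_sub (α ^ 2 / 2)
  rw [zero_mul, sub_zero] at h
  refine h.congr' ?_
  filter_upwards [self_mem_nhdsWithin] with l (hl : l ≠ 0)
  field_simp
  ring

theorem tendsto_cos_add_cos_sub_cos_sub_cos_div_pow_four {α₁ α₂ β₁ β₂ : ℝ}
    (h : α₁ ^ 2 + α₂ ^ 2 = β₁ ^ 2 + β₂ ^ 2) :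
    Tendsto (fun l => (cos (α₁ * l) + cos (α₂ * l) - cos (β₁ * l) - cos (β₂ * l)) / l ^ 4)
      (𝓝[≠] 0) (𝓝 ((α₁ ^ 4 + α₂ ^ 4 - β₁ ^ 4 - β₂ ^ 4) / 24)) := by
  have hlim := ((tendsto_cos_sub_taylor_div_pow_four α₁).add
    (tendsto_cos_sub_taylor_div_pow_four α₂)).sub
    ((tendsto_cos_sub_taylor_div_pow_four β₁).add (tendsto_cos_sub_taylor_div_pow_four β₂))
  rw [show α₁ ^ 4 / 24 + α₂ ^ 4 / 24 - (β₁ ^ 4 / 24 + β₂ ^ 4 / 24) =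
    (α₁ ^ 4 + α₂ ^ 4 - β₁ ^ 4 - β₂ ^ 4) / 24 by ring] at hlim
  refine hlim.congr fun l => ?_
  rw [← add_div, ← add_div, ← sub_div]
  congr 1
  linear_combination (l ^ 2 / 2) * h

/-- The cosine of the median to the side `c` of a triangle with sides `a, b, c` on the unit sphere:
add the spherical laws of cosines in the two triangles into which the median cuts it. -/
noncomputable def sphericalMedianCos (a b c : ℝ) : ℝ := (cos a + cos b) / (2 * cos (c / 2))

theorem tendsto_cos_sub_sphericalMedianCos_div_pow_four {a b c p : ℝ}
    (hp : 4 * p ^ 2 = 2 * a ^ 2 + 2 * b ^ 2 - c ^ 2) :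
    Tendsto (fun l => (cos (p * l) - sphericalMedianCos (a * l) (b * l) (c * l)) / l ^ 4)
      (𝓝[≠] 0) (𝓝 ((a + b + c) * (-a + b + c) * (a - b + c) * (a + b - c) / 96)) := by
  have hnum := tendsto_cos_add_cos_sub_cos_sub_cos_div_pow_four (α₁ := c / 2 + p)
    (α₂ := c / 2 - p) (β₁ := a) (β₂ := b) (by linear_combination hp / 2)
  have hden : Tendsto (fun l : ℝ => 2 * cos (c * l / 2)) (𝓝[≠] 0) (𝓝 2) :=
    ((by fun_prop : Continuous fun l : ℝ => 2 * cos (c * l / 2)).tendsto' 0 2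
      (by simp)).mono_left nhdsWithin_le_nhds
  have hlim := hnum.div hden two_ne_zero
  rw [show (((c / 2 + p) ^ 4 + (c / 2 - p) ^ 4 - a ^ 4 - b ^ 4) / 24) / 2 =
    (a + b + c) * (-a + b + c) * (a - b + c) * (a + b - c) / 96 by
      linear_combination ((a ^ 2 + b ^ 2) / 192 + 5 * c ^ 2 / 384 + p ^ 2 / 96) * hp] at hlim
  refine hlim.congr' ?_
  filter_upwards [hden.eventually_ne two_ne_zero] with l hl
  have hC : cos (c * l / 2) ≠ 0 := right_ne_zero_of_mul hl
  have hprod : cos ((c / 2 + p) * l) + cos ((c / 2 - p) * l) = 2 * cos (c * l / 2) * cos (p * l) := by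
    rw [show (c / 2 + p) * l = c * l / 2 + p * l by ring,
      show (c / 2 - p) * l = c * l / 2 - p * l by ring, cos_add, cos_sub]
    ring
  simp only [Pi.div_apply, sphericalMedianCos]
  rw [hprod]
  field_simp
  ring

theorem Real.sin_eq_mul_sinc (x : ℝ) : sin x = x * sinc x := by
  rcases eq_or_ne x 0 with rfl | hx
  · simp
  · rw [sinc_of_ne_zero hx, mul_div_cancel₀ _ hx]

theorem Real.cos_sub_cos_eq_mul_sinc (x y : ℝ) :
    cos y - cos x = (x + y) * (x - y) / 2 * sinc ((x + y) / 2) * sinc ((x - y) / 2) := by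
  rw [cos_sub_cos, ← neg_sub x y, neg_div, sin_neg, add_comm y x, sin_eq_mul_sinc,
    sin_eq_mul_sinc]
  ring

section

variable {ι : Type*} {F : Filter ι} {θ φ r : ι → ℝ} {p M : ℝ}

theorem Filter.Tendsto.sinc {x : ℝ} (hθ : Tendsto θ F (𝓝 x)) :
    Tendsto (fun i => sinc (θ i)) F (𝓝 (sinc x)) :=
  (continuous_sinc.tendsto x).comp hθ

theorem tendsto_div_of_tendsto_one_sub_cos_div_sq (hp : 0 ≤ p) (hθ : Tendsto θ F (𝓝 0))
    (hnonneg : ∀ᶠ i in F, 0 ≤ θ i / r i)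
    (h : Tendsto (fun i => (1 - cos (θ i)) / r i ^ 2) F (𝓝 (p ^ 2 / 2))) :
    Tendsto (fun i => θ i / r i) F (𝓝 p) := by
  have hsinc : Tendsto (fun i => sinc (θ i / 2)) F (𝓝 1) := by
    simpa using (hθ.div_const 2).sinc
  have hsq : Tendsto (fun i => (θ i / r i) ^ 2) F (𝓝 (p ^ 2)) := by
    have hlim := (h.const_mul 2).div (hsinc.pow 2) (by norm_num)
    rw [one_pow, div_one, mul_div_cancel₀ _ two_ne_zero] at hlim
    refine hlim.congr' ?_
    filter_upwards [hsinc.eventually_ne one_ne_zero] with i hi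
    have h1 := cos_sub_cos_eq_mul_sinc (θ i) 0
    simp only [cos_zero, add_zero, sub_zero] at h1
    simp only [Pi.div_apply]
    rw [h1]
    field_simp
  have hsqrt := (continuous_sqrt.tendsto _).comp hsq
  rw [sqrt_sq hp] at hsqrt
  refine hsqrt.congr' ?_
  filter_upwards [hnonneg] with i hi
  exact sqrt_sq hi

theorem tendsto_sub_div_pow_three_of_tendsto_cos_sub_cos (hp : p ≠ 0)
    (hθ : Tendsto θ F (𝓝 0)) (hφ : Tendsto φ F (𝓝 0))
    (hsum : Tendsto (fun i => (θ i + φ i) / r i) F (𝓝 (2 * p)))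
    (hcos : Tendsto (fun i => (cos (φ i) - cos (θ i)) / r i ^ 4) F (𝓝 M)) :
    Tendsto (fun i => (θ i - φ i) / r i ^ 3) F (𝓝 (M / p)) := by
  have hsinc₁ : Tendsto (fun i => sinc ((θ i + φ i) / 2)) F (𝓝 1) := by
    simpa using ((hθ.add hφ).div_const 2).sinc
  have hsinc₂ : Tendsto (fun i => sinc ((θ i - φ i) / 2)) F (𝓝 1) := by
    simpa using ((hθ.sub hφ).div_const 2).sinc
  have hden := (hsum.mul hsinc₁).mul hsinc₂
  rw [mul_one, mul_one] at hden
  have hlim := (hcos.const_mul 2).div hden (mul_ne_zero two_ne_zero hp)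
  rw [mul_div_mul_left _ _ two_ne_zero] at hlim
  refine hlim.congr' ?_
  filter_upwards [hden.eventually_ne (mul_ne_zero two_ne_zero hp)] with i hi
  simp only [Pi.div_apply]
  rw [cos_sub_cos_eq_mul_sinc (θ i) (φ i)]
  obtain ⟨⟨⟨hθφ, hr⟩, hs₁⟩, hs₂⟩ : ((θ i + φ i ≠ 0 ∧ r i ≠ 0) ∧ sinc ((θ i + φ i) / 2) ≠ 0) ∧
      sinc ((θ i - φ i) / 2) ≠ 0 := by
    simpa only [mul_ne_zero_iff, div_ne_zero_iff] using hi
  field_simp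

end

theorem tendsto_arccos_sub_mul_div_pow_three {u : ℝ → ℝ} {p M : ℝ} (hp : 0 < p)
    (hu : Tendsto (fun l => (cos (p * l) - u l) / l ^ 4) (𝓝[>] 0) (𝓝 M)) :
    Tendsto (fun l => (arccos (u l) - p * l) / l ^ 3) (𝓝[>] 0) (𝓝 (M / p)) := by
  have hpos : ∀ᶠ l in 𝓝[>] (0 : ℝ), 0 < l := self_mem_nhdsWithin
  have hl : Tendsto (fun l : ℝ => l) (𝓝[>] 0) (𝓝 0) := nhdsWithin_le_nhds
  have hcos : Tendsto (fun l => (1 - cos (p * l)) / l ^ 2) (𝓝[>] 0) (𝓝 (p ^ 2 / 2)) :=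
    (tendsto_one_sub_cos_mul_div_sq p).mono_left (nhdsWithin_mono _ fun l hl => ne_of_gt hl)
  have hu₂ : Tendsto (fun l => (1 - u l) / l ^ 2) (𝓝[>] 0) (𝓝 (p ^ 2 / 2)) := by
    have hlim := hcos.add ((hl.pow 2).mul hu)
    rw [zero_pow two_ne_zero, zero_mul, add_zero] at hlim
    refine hlim.congr' ?_
    filter_upwards [hpos] with l hl
    field_simp
    ring
  have hu₁ : Tendsto u (𝓝[>] 0) (𝓝 1) := by
    have hlim := ((hl.pow 2).mul hu₂).const_sub 1
    rw [zero_pow two_ne_zero, zero_mul, sub_zero] at hlim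
    refine hlim.congr' ?_
    filter_upwards [hpos] with l hl
    field_simp
    ring
  have hcos_arccos : ∀ᶠ l in 𝓝[>] (0 : ℝ), cos (arccos (u l)) = u l := by
    filter_upwards [hu₂.eventually (eventually_gt_nhds (by positivity)),
      hu₁.eventually (eventually_gt_nhds (by norm_num : (-1 : ℝ) < 1)), hpos] with l h₁ h₂ hl
    exact cos_arccos h₂.le (sub_pos.mp ((div_pos_iff_of_pos_right (by positivity)).mp h₁)).le
  have hθ : Tendsto (fun l => arccos (u l)) (𝓝[>] 0) (𝓝 0) := by
    simpa [Function.comp_def] using (continuous_arccos.tendsto 1).comp hu₁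
  have hθ_div : Tendsto (fun l => arccos (u l) / l) (𝓝[>] 0) (𝓝 p) := by
    refine tendsto_div_of_tendsto_one_sub_cos_div_sq hp.le hθ ?_ (hu₂.congr' ?_)
    · filter_upwards [hpos] with l hl
      exact div_nonneg (arccos_nonneg _) hl.le
    · filter_upwards [hcos_arccos] with l h
      rw [h]
  have hφ : Tendsto (fun l => p * l) (𝓝[>] 0) (𝓝 0) := by
    simpa using hl.const_mul p
  refine tendsto_sub_div_pow_three_of_tendsto_cos_sub_cos hp.ne' hθ hφ ?_ (hu.congr' ?_)
  · rw [two_mul]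
    refine (hθ_div.add_const p).congr' ?_
    filter_upwards [hpos] with l hl
    field_simp
  · filter_upwards [hcos_arccos] with l h
    rw [h]

theorem spherical_median_third_order_general (k ab ac bc : ℝ) (hk : 0 < k)
    (hbc : 0 < bc) (htri : bc < ab + ac) :
    Tendsto
      (fun l : ℝ =>
        ((1 / Real.sqrt k) * Real.arccos
            ((Real.cos (ab * Real.sqrt k * l) + Real.cos (ac * Real.sqrt k * l)) /
              (2 * Real.cos (bc * Real.sqrt k * l / 2)))
          - l * Real.sqrt (2 * ab ^ 2 + 2 * ac ^ 2 - bc ^ 2) / 2) / l ^ 3)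
      (nhdsWithin 0 (Set.Ioi 0))
      (nhds (-(k / 48) * ((ab - ac - bc) * (ab + ac - bc) * (ab - ac + bc) *
          (ab + ac + bc)) / Real.sqrt (2 * (ab ^ 2 + ac ^ 2) - bc ^ 2))) := by
  rw [show 2 * (ab ^ 2 + ac ^ 2) - bc ^ 2 = 2 * ab ^ 2 + 2 * ac ^ 2 - bc ^ 2 by ring]
  set s := √k
  set S := √(2 * ab ^ 2 + 2 * ac ^ 2 - bc ^ 2)
  have hs : 0 < s := sqrt_pos.mpr hk
  have hs₂ : s ^ 2 = k := sq_sqrt hk.le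
  have hmedian : 0 < 2 * ab ^ 2 + 2 * ac ^ 2 - bc ^ 2 := by nlinarith [sq_nonneg (ab - ac)]
  have hS : 0 < S := sqrt_pos.mpr hmedian
  have hS₂ : S ^ 2 = 2 * ab ^ 2 + 2 * ac ^ 2 - bc ^ 2 := sq_sqrt hmedian.le
  have hp : 4 * (s * S / 2) ^ 2 = 2 * (ab * s) ^ 2 + 2 * (ac * s) ^ 2 - (bc * s) ^ 2 := by
    linear_combination s ^ 2 * hS₂
  have hcos := (tendsto_cos_sub_sphericalMedianCos_div_pow_four hp).mono_left
    (nhdsWithin_mono _ fun l hl => ne_of_gt hl)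
  have hlim := (tendsto_arccos_sub_mul_div_pow_three (by positivity) hcos).const_mul (1 / s)
  convert hlim using 2 with l
  · simp only [sphericalMedianCos]
    field_simp
  · rw [← hs₂]
    field_simp
    ring

/-- The spherical comparison median deviates from the Euclidean median at
order `λ³`: with `g(λ)` the distance from the vertex to the midpoint of the
opposite side in a comparison triangle of side lengths `λ·ab, λ·ac, λ·bc` in
the sphere of curvature `k > 0`, the ratio
`(g(λ) − λ·√(2ab² + 2ac² − bc²)/2) / λ³` tends to
`−(k/48)·(ab−ac−bc)(ab+ac−bc)(ab−ac+bc)(ab+ac+bc)/√(2(ab²+ac²)−bc²)`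
as `λ → 0⁺`. -/
theorem spherical_median_third_order (k ab ac bc : ℝ) (hk : 0 < k)
    (hab : 0 < ab) (hac : 0 < ac) (hbc : 0 < bc) (htri : bc < ab + ac) :
    Tendsto
      (fun l : ℝ =>
        ((1 / Real.sqrt k) * Real.arccos
            ((Real.cos (ab * Real.sqrt k * l) + Real.cos (ac * Real.sqrt k * l)) /
              (2 * Real.cos (bc * Real.sqrt k * l / 2)))
          - l * Real.sqrt (2 * ab ^ 2 + 2 * ac ^ 2 - bc ^ 2) / 2) / l ^ 3)
      (nhdsWithin 0 (Set.Ioi 0))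
      (nhds (-(k / 48) * ((ab - ac - bc) * (ab + ac - bc) * (ab - ac + bc) *
          (ab + ac + bc)) / Real.sqrt (2 * (ab ^ 2 + ac ^ 2) - bc ^ 2))) :=
  spherical_median_third_order_general k ab ac bc hk hbc htri
end
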